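/- Let n > 2, let V = 𝔽₂ⁿ, let g ∈ Sym(V), and let W ≤ V be a subspace such that σ_W = T ∩ T^g. If dim(W) = n − 2, then T^g is a (proper) subgroup of the affine group AGL(V). -/

import Mathlib

open Equiv

/-- `V n` is the `n`-dimensional vector space over the field with two elements. -/
abbrev V (n : ℕ) : Type := Fin n → ZMod 2

/-- The subgroup `σ_W` of `Sym(V)` consisting of the translations `x ↦ x + w` with `w ∈ W`. -/
def sigmaSub (n : ℕ) (W : Submodule (ZMod 2) (V n)) : Subgroup (Equiv.Perm (V n)) where
  carrier := {g | ∃ v ∈ W, ∀ x, g x = x + v}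
  one_mem' := ⟨0, W.zero_mem, fun x => by simp⟩
  mul_mem' := by
    rintro a b ⟨v, hv, ha⟩ ⟨w, hw, hb⟩
    exact ⟨w + v, W.add_mem hw hv, fun x => by
      simp [Equiv.Perm.mul_apply, ha, hb, add_assoc]⟩
  inv_mem' := by
    rintro a ⟨v, hv, ha⟩
    refine ⟨-v, W.neg_mem hv, fun x => a.injective ?_⟩
    rw [Equiv.Perm.inv_def, Equiv.apply_symm_apply, ha]
    abel

/-- The translation group `T`, i.e. the image of the right regular representation
of `(V, +)` in `Sym(V)`. -/
def T (n : ℕ) : Subgroup (Equiv.Perm (V n)) := sigmaSub n ⊤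

/-- The affine group `AGL(V) = T ⋊ GL(V)`, consisting of the invertible affine
transformations `x ↦ L x + v` of `V`. -/
def AGL (n : ℕ) : Subgroup (Equiv.Perm (V n)) where
  carrier := {g | ∃ (L : V n ≃ₗ[ZMod 2] V n) (v : V n), ∀ x, g x = L x + v}
  one_mem' := ⟨LinearEquiv.refl _ _, 0, fun x => by simp⟩
  mul_mem' := by
    rintro a b ⟨L, v, ha⟩ ⟨M, w, hb⟩
    exact ⟨M ≪≫ₗ L, L w + v, fun x => by
      simp [Equiv.Perm.mul_apply, ha, hb, map_add, add_assoc]⟩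
  inv_mem' := by
    rintro a ⟨L, v, ha⟩
    refine ⟨L.symm, -(L.symm v), fun x => a.injective ?_⟩
    rw [Equiv.Perm.inv_def, Equiv.apply_symm_apply, ha, map_add, map_neg, LinearEquiv.apply_symm_apply,
      LinearEquiv.apply_symm_apply]
    abel

/-- The conjugate subgroup `H^g = g⁻¹ H g`. -/
def conjSub {G : Type*} [Group G] (H : Subgroup G) (g : G) : Subgroup G :=
  H.map (MulAut.conj g⁻¹).toMonoidHom

/-- A subgroup of `Sym(V)` is an elementary abelian regular subgroup if it is an
elementary abelian 2-group (every element squares to the identity) acting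
regularly (sharply transitively) on `V`. -/
def IsElemAbelianRegular (n : ℕ) (R : Subgroup (Equiv.Perm (V n))) : Prop :=
  (∀ r ∈ R, r * r = 1) ∧ ∀ x y : V n, ∃! r : R, (r : Equiv.Perm (V n)) x = y

/-- `A` is a normal subgroup of `B` (as subgroups of a common ambient group). -/
def NormalIn {G : Type*} [Group G] (A B : Subgroup G) : Prop :=
  A ≤ B ∧ ∀ b ∈ B, ∀ a ∈ A, b * a * b⁻¹ ∈ A

/-- `S` is a Sylow `2`-subgroup of `K` (as subgroups of a common ambient group):
`S` is a `2`-subgroup of `K` maximal among the `2`-subgroups of `K`. -/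
def IsSylow2Of {G : Type*} [Group G] (S K : Subgroup G) : Prop :=
  S ≤ K ∧ IsPGroup 2 S ∧ ∀ Q : Subgroup G, Q ≤ K → IsPGroup 2 Q → S ≤ Q → Q = S

/-!
Let `R = T^g`. It is an elementary abelian group acting regularly on `V`, and it contains `σ_W`,
so every `r ∈ R` commutes with the translations by `W` and permutes the four cosets of `W`. The
induced action of `R` on `V/W ≅ 𝔽₂²` is again regular and elementary abelian, and on four points
the translation group is the only such group: `r x ≡ x + r 0 (mod W)`. The defect
`δ x = r x - (x + r 0)` therefore lies in `W`, is invariant under `W` and, because `r` is an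
involution, also under `r 0`. When `r 0 ∉ W` these periods form a subgroup of index two, and a
function vanishing at `0` with such periods is additive; so `x ↦ r x - r 0` is linear and
`r ∈ AGL(V)`. The inclusion is strict because the regular group `R` contains no nontrivial
permutation fixing `0`, such as a coordinate swap.
-/

theorem eq_add_of_card_eq_four {Q : Type*} [AddCommGroup Q] [Module (ZMod 2) Q]
    (hQ : Nat.card Q = 4) {a b c : Q} (ha : a ≠ 0) (hb : b ≠ 0) (hab : a ≠ b)
    (hc : c ≠ 0) (hca : c ≠ a) (hcb : c ≠ b) : c = a + b := by
  classical
  have : Fintype Q := @Fintype.ofFinite Q (Nat.finite_of_card_ne_zero (by omega))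
  by_contra hcab
  have hab0 : a + b ≠ 0 := by rwa [Ne, add_eq_zero_iff_eq_neg, ZModModule.neg_eq_self]
  have haba : a + b ≠ a := by simpa using hb
  have habb : a + b ≠ b := by simpa using ha
  have h5 : ({0, a, b, a + b, c} : Finset Q).card = 5 := by
    rw [Finset.card_insert_of_notMem (by simp [Ne.symm ha, Ne.symm hb, Ne.symm hab0, Ne.symm hc]),
      Finset.card_insert_of_notMem (by simp [hab, Ne.symm haba, Ne.symm hca]),
      Finset.card_insert_of_notMem (by simp [Ne.symm habb, Ne.symm hcb]),
      Finset.card_pair (Ne.symm hcab)]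
  have := Finset.card_le_univ ({0, a, b, a + b, c} : Finset Q)
  rw [h5, Fintype.card_eq_nat_card, hQ] at this
  omega

theorem map_add_of_periodic {M N : Type*} [AddCommGroup M] [Module (ZMod 2) M]
    [AddCommGroup N] [Module (ZMod 2) N] {S : Set M} (hS : ∀ x y, x ∉ S → y ∉ S → x + y ∈ S)
    {f : M → N} (h0 : f 0 = 0) (hf : ∀ x, ∀ s ∈ S, f (x + s) = f x) (x y : M) :
    f (x + y) = f x + f y := by
  have hfS : ∀ s ∈ S, f s = 0 := fun s hs => by simpa [h0] using hf 0 s hs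
  by_cases hx : x ∈ S
  · rw [add_comm, hf y x hx, hfS x hx, zero_add]
  by_cases hy : y ∈ S
  · rw [hf x y hy, hfS y hy, add_zero]
  have hxy := hS x y hx hy
  have hyx : f y = f x := by
    simpa [← add_assoc, ZModModule.add_self] using hf x _ hxy
  rw [hfS _ hxy, hyx, ZModModule.add_self]

def translationDefect {n : ℕ} (r : Perm (V n)) (x : V n) : V n := r x - (x + r 0)

namespace IsElemAbelianRegular

variable {n : ℕ} {R : Subgroup (Perm (V n))}

theorem mk' (hsq : ∀ r ∈ R, r * r = 1) (hex : ∀ x y, ∃ r ∈ R, r x = y)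
    (huniq : ∀ r ∈ R, ∀ s ∈ R, ∀ x, r x = s x → r = s) : IsElemAbelianRegular n R := by
  refine ⟨hsq, fun x y => ?_⟩
  obtain ⟨r, hr, hrxy⟩ := hex x y
  exact ⟨⟨r, hr⟩, hrxy, fun s hs => Subtype.ext (huniq _ s.2 _ hr x (hs.trans hrxy.symm))⟩

variable (hR : IsElemAbelianRegular n R)
include hR

theorem exists_apply_eq (x y : V n) : ∃ r ∈ R, r x = y := by
  obtain ⟨⟨r, hr⟩, hrxy, -⟩ := hR.2 x y
  exact ⟨r, hr, hrxy⟩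

theorem eq_of_apply_eq {r s : Perm (V n)} (hr : r ∈ R) (hs : s ∈ R) {x : V n} (h : r x = s x) :
    r = s :=
  congrArg Subtype.val ((hR.2 x (s x)).unique (y₁ := ⟨r, hr⟩) (y₂ := ⟨s, hs⟩) h rfl)

theorem apply_apply_self {r : Perm (V n)} (hr : r ∈ R) (x : V n) : r (r x) = x := by
  rw [← Perm.mul_apply, hR.1 r hr, Perm.one_apply]

theorem apply_comm {r s : Perm (V n)} (hr : r ∈ R) (hs : s ∈ R) (x : V n) :
    r (s x) = s (r x) := by
  have hinv : ∀ t ∈ R, t⁻¹ = t := fun t ht => inv_eq_of_mul_eq_one_right (hR.1 t ht)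
  have hrs : r * s = s * r := by
    calc r * s = (r * s)⁻¹ := (hinv _ (R.mul_mem hr hs)).symm
      _ = s * r := by rw [mul_inv_rev, hinv s hs, hinv r hr]
  exact DFunLike.congr_fun hrs x

theorem conjSub (g : Perm (V n)) : IsElemAbelianRegular n (conjSub R g) := by
  refine mk' ?_ (fun x y => ?_) ?_
  · rintro _ ⟨s, hs, rfl⟩
    rw [← map_mul, hR.1 s hs, map_one]
  · obtain ⟨s, hs, hsxy⟩ := hR.exists_apply_eq (g x) (g y)
    exact ⟨_, ⟨s, hs, rfl⟩, by simp [hsxy]⟩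
  · rintro _ ⟨s, hs, rfl⟩ _ ⟨t, ht, rfl⟩ x hx
    simp only [MulEquiv.coe_toMonoidHom, MulAut.conj_apply, inv_inv, Perm.mul_apply,
      EmbeddingLike.apply_eq_iff_eq] at hx
    rw [hR.eq_of_apply_eq hs ht hx]

theorem ne_AGL (hn : 2 ≤ n) : R ≠ AGL n := by
  intro hRA
  let i : Fin n := ⟨0, by omega⟩
  let j : Fin n := ⟨1, by omega⟩
  let L := LinearEquiv.funCongrLeft (ZMod 2) (ZMod 2) (Equiv.swap i j)
  let e := L.toEquiv
  have he : e ∈ R := hRA ▸ ⟨L, 0, fun x => (add_zero _).symm⟩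
  have he1 : e = 1 := hR.eq_of_apply_eq he R.one_mem (x := 0) (by simp [e])
  have := congr($he1 (Pi.single i 1) j)
  simp [e, L, i, j, LinearEquiv.funCongrLeft_apply, Fin.ext_iff] at this

end IsElemAbelianRegular

theorem isElemAbelianRegular_T (n : ℕ) : IsElemAbelianRegular n (T n) := by
  refine .mk' ?_ (fun x y => ⟨Equiv.addRight (y - x), ⟨y - x, trivial, fun _ => rfl⟩,
    add_sub_cancel x y⟩) ?_
  · rintro r ⟨v, -, hr⟩
    ext x
    simp [hr, add_assoc, ZModModule.add_self]
  · rintro r ⟨v, -, hr⟩ s ⟨w, -, hs⟩ x hx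
    rw [hr, hs, add_right_inj] at hx
    ext y
    rw [hr, hs, hx]

namespace IsElemAbelianRegular

variable {n : ℕ} {R : Subgroup (Perm (V n))} (hR : IsElemAbelianRegular n R)
  {W : Submodule (ZMod 2) (V n)} (hWR : sigmaSub n W ≤ R)
include hR hWR

theorem apply_add_of_mem {r : Perm (V n)} (hr : r ∈ R) {w : V n} (hw : w ∈ W) (x : V n) :
    r (x + w) = r x + w :=
  hR.apply_comm hr (s := Equiv.addRight w) (hWR ⟨w, hw, fun _ => rfl⟩) x

theorem eq_addRight_of_apply_zero_mem {r : Perm (V n)} (hr : r ∈ R) (h0 : r 0 ∈ W) :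
    r = Equiv.addRight (r 0) :=
  hR.eq_of_apply_eq hr (hWR ⟨r 0, h0, fun _ => rfl⟩) (x := 0) (zero_add _).symm

theorem mkQ_apply_eq_mkQ_apply_iff {r : Perm (V n)} (hr : r ∈ R) {x y : V n} :
    W.mkQ (r x) = W.mkQ (r y) ↔ W.mkQ x = W.mkQ y := by
  simp only [Submodule.mkQ_apply, Submodule.Quotient.eq]
  constructor
  · intro h
    have : r x = r (y + (r x - r y)) := by
      rw [hR.apply_add_of_mem hWR hr h]
      abel
    rwa [r.injective this, add_sub_cancel_left]
  · intro h
    rwa [← sub_add_cancel x y, add_comm, hR.apply_add_of_mem hWR hr h, add_sub_cancel_left]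

theorem mkQ_apply (hQ : Nat.card (V n ⧸ W) = 4) {r : Perm (V n)} (hr : r ∈ R) (x : V n) :
    W.mkQ (r x) = W.mkQ x + W.mkQ (r 0) := by
  obtain ⟨s, hs, rfl⟩ := hR.exists_apply_eq 0 x
  have heq_r0 : W.mkQ (r (s 0)) = W.mkQ (r 0) ↔ W.mkQ (s 0) = 0 := by
    rw [hR.mkQ_apply_eq_mkQ_apply_iff hWR hr (x := s 0) (y := 0), map_zero W.mkQ]
  have heq_zero : W.mkQ (r (s 0)) = 0 ↔ W.mkQ (s 0) = W.mkQ (r 0) := by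
    have := hR.mkQ_apply_eq_mkQ_apply_iff hWR hr (x := s 0) (y := r 0)
    rwa [hR.apply_apply_self hr, map_zero W.mkQ] at this
  have heq_s0 : W.mkQ (r (s 0)) = W.mkQ (s 0) ↔ W.mkQ (r 0) = 0 := by
    rw [hR.apply_comm hr hs, hR.mkQ_apply_eq_mkQ_apply_iff hWR hs (x := r 0) (y := 0),
      map_zero W.mkQ]
  by_cases ha : W.mkQ (r 0) = 0
  · rw [ha, add_zero]
    exact heq_s0.2 ha
  by_cases hb : W.mkQ (s 0) = 0
  · rw [hb, zero_add]
    exact heq_r0.2 hb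
  by_cases hba : W.mkQ (s 0) = W.mkQ (r 0)
  · rw [hba, ZModModule.add_self]
    exact heq_zero.2 hba
  -- `W.mkQ (r (s 0))` avoids the three classes `0`, `W.mkQ (r 0)`, `W.mkQ (s 0)`,
  -- so it is the fourth one.
  exact eq_add_of_card_eq_four hQ hb ha hba (mt heq_zero.1 hba) (mt heq_s0.1 ha)
    (mt heq_r0.1 hb)

theorem translationDefect_mem (hQ : Nat.card (V n ⧸ W) = 4) {r : Perm (V n)} (hr : r ∈ R)
    (x : V n) : translationDefect r x ∈ W := by
  rw [translationDefect, ← Submodule.Quotient.eq, ← Submodule.mkQ_apply, ← Submodule.mkQ_apply,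
    map_add, hR.mkQ_apply hWR hQ hr]

theorem translationDefect_add_of_mem {r : Perm (V n)} (hr : r ∈ R) {w : V n} (hw : w ∈ W)
    (x : V n) : translationDefect r (x + w) = translationDefect r x := by
  simp only [translationDefect, hR.apply_add_of_mem hWR hr hw]
  abel

theorem translationDefect_add_apply_zero (hQ : Nat.card (V n ⧸ W) = 4) {r : Perm (V n)}
    (hr : r ∈ R) (x : V n) : translationDefect r (x + r 0) = translationDefect r x := by
  set δ := translationDefect r x
  have hrx : r x = x + r 0 + δ := by simp only [δ, translationDefect]; abel
  have hr_add : r (x + r 0) = x - δ := by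
    have := hR.apply_apply_self hr x
    rw [hrx, hR.apply_add_of_mem hWR hr (hR.translationDefect_mem hWR hQ hr x)] at this
    exact eq_sub_of_add_eq this
  calc translationDefect r (x + r 0) = -δ - (r 0 + r 0) := by
        rw [translationDefect, hr_add]; abel
    _ = δ := by rw [ZModModule.neg_eq_self, ZModModule.add_self, sub_zero]

theorem translationDefect_add (hQ : Nat.card (V n ⧸ W) = 4) {r : Perm (V n)} (hr : r ∈ R)
    (h0 : r 0 ∉ W) (x y : V n) :
    translationDefect r (x + y) = translationDefect r x + translationDefect r y := by
  have ha : W.mkQ (r 0) ≠ 0 := by rwa [Ne, Submodule.mkQ_apply, Submodule.Quotient.mk_eq_zero]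
  refine map_add_of_periodic (S := {z | W.mkQ z = 0 ∨ W.mkQ z = W.mkQ (r 0)}) ?_ ?_ ?_ x y
  · simp only [Set.mem_ofPred_eq, not_or, map_add]
    rintro x y ⟨hx0, hxa⟩ ⟨hy0, hya⟩
    by_cases hxy : W.mkQ y = W.mkQ x
    · exact .inl (by rw [hxy, ZModModule.add_self])
    · right
      rw [eq_add_of_card_eq_four hQ ha hx0 (Ne.symm hxa) hy0 hya hxy, add_left_comm,
        ZModModule.add_self, add_zero]
  · simp [translationDefect]
  · rintro x s (hs | hs)
    · exact hR.translationDefect_add_of_mem hWR hr ((Submodule.Quotient.mk_eq_zero W).1 hs) x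
    · have hw : s - r 0 ∈ W := (Submodule.Quotient.eq W).1 hs
      rw [← add_sub_cancel (r 0) s, ← add_assoc, hR.translationDefect_add_of_mem hWR hr hw,
        hR.translationDefect_add_apply_zero hWR hQ hr]

theorem apply_add (hQ : Nat.card (V n ⧸ W) = 4) {r : Perm (V n)} (hr : r ∈ R) (x y : V n) :
    r (x + y) = r x + r y - r 0 := by
  by_cases h0 : r 0 ∈ W
  · rw [hR.eq_addRight_of_apply_zero_mem hWR hr h0]
    simp only [Equiv.coe_addRight]
    abel
  · have := hR.translationDefect_add hWR hQ hr h0 x y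
    simp only [translationDefect] at this
    rw [← sub_eq_zero] at this ⊢
    convert this using 1
    abel

theorem mem_AGL (hQ : Nat.card (V n ⧸ W) = 4) {r : Perm (V n)} (hr : r ∈ R) : r ∈ AGL n := by
  let L : V n →+ V n := AddMonoidHom.mk' (fun x => r x - r 0) fun x y => by
    rw [hR.apply_add hWR hQ hr]
    abel
  have hL : Function.Bijective (L.toZModLinearMap 2) :=
    (r.trans (Equiv.subRight (r 0))).bijective
  exact ⟨.ofBijective _ hL, r 0, fun x => (sub_add_cancel (r x) (r 0)).symm⟩

end IsElemAbelianRegular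

/-- If `σ_W = T ∩ T^g` with `dim W = n - 2`, then `T^g` is a proper subgroup of `AGL(V)`. -/
theorem conj_translationGroup_lt_AGL_of_second_maximal_intersection
    (n : ℕ) (hn : 2 < n) (g : Equiv.Perm (V n))
    (W : Submodule (ZMod 2) (V n))
    (hW : sigmaSub n W = T n ⊓ conjSub (T n) g)
    (hdim : Module.finrank (ZMod 2) W = n - 2) :
    conjSub (T n) g < AGL n := by
  have hR := (isElemAbelianRegular_T n).conjSub g
  have hWR : sigmaSub n W ≤ conjSub (T n) g := hW ▸ inf_le_right
  have hQ : Nat.card (V n ⧸ W) = 4 := by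
    have := W.finrank_quotient_add_finrank
    rw [hdim, Module.finrank_fin_fun] at this
    rw [Nat.card_eq_fintype_card, Module.card_eq_pow_finrank (K := ZMod 2), ZMod.card,
      show Module.finrank (ZMod 2) (V n ⧸ W) = 2 by omega]
    rfl
  exact lt_of_le_of_ne (fun r hr => hR.mem_AGL hWR hQ hr) (hR.ne_AGL hn.le)
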